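/- arXiv:2410.00221 — 5 statements merged into one kernel-verified Lean document; each statement's English description precedes it below -/
import Mathlib

section
/- For probability vectors p and q on I objects and any draw size K ≥ 1, the expected dissimilarity between two independent unordered draws of size K with replacement—one taken according to p and one according to q—equals 1 − ∑_{i=1}^{I} p_i q_i. Concretely: ∑_{X₁ ∈ (Fin I)^K} ∑_{X₂ ∈ (Fin I)^K} (∏_{k} p(X₁ k)) · (∏_{k} q(X₂ k)) · D(count X₁, count X₂) = 1 − ∑_{i} p_i q_i, where count X : Fin I → ℕ records for each i the number of coordinates k with X k = i. -/
open Finset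

/-- Expected dissimilarity between two independent unordered draws of size `K`
with replacement from `I` objects, one drawn according to `p`, the other
according to `q`. The dissimilarity between the two draws is
`1 - (1/K²) ∑ i (count X₁ i)(count X₂ i)`. -/
noncomputable def expectedDissim (K I : ℕ) (p q : Fin I → ℝ) : ℝ :=
  ∑ X₁ : Fin K → Fin I, ∑ X₂ : Fin K → Fin I,
    ((∏ k, p (X₁ k)) * (∏ k, q (X₂ k))) *
      (1 - (1 / (K : ℝ) ^ 2) *
        ∑ i : Fin I, ((Finset.univ.filter fun k => X₁ k = i).card : ℝ) *
          ((Finset.univ.filter fun k => X₂ k = i).card : ℝ))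


lemma aux_one (K I : ℕ) (p : Fin I → ℝ) (hp1 : ∑ i, p i = 1) :
    ∑ X : Fin K → Fin I, ∏ k, p (X k) = 1 := by
  have := Finset.prod_univ_sum (fun _ : Fin K => (univ : Finset (Fin I))) (fun _ x => p x)
  rw [Fintype.piFinset_univ] at this
  rw [← this, hp1, Finset.prod_const_one]

lemma aux_count (K I : ℕ) (p : Fin I → ℝ) (hp1 : ∑ i, p i = 1) (i : Fin I) :
    ∑ X : Fin K → Fin I,
      (∏ k, p (X k)) * ((Finset.univ.filter fun k => X k = i).card : ℝ) = K * p i := by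
  have hcard : ∀ X : Fin K → Fin I,
      ((Finset.univ.filter fun k => X k = i).card : ℝ)
        = ∑ k : Fin K, (if X k = i then (1:ℝ) else 0) := by
    intro X
    rw [Finset.card_filter]
    push_cast
    rfl
  calc ∑ X : Fin K → Fin I,
      (∏ k, p (X k)) * ((Finset.univ.filter fun k => X k = i).card : ℝ)
      = ∑ X : Fin K → Fin I, ∑ k : Fin K, (∏ j, p (X j)) * (if X k = i then (1:ℝ) else 0) := by
        simp_rw [hcard, Finset.mul_sum]
    _ = ∑ k : Fin K, ∑ X : Fin K → Fin I, (∏ j, p (X j)) * (if X k = i then (1:ℝ) else 0) :=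
        Finset.sum_comm
    _ = ∑ k : Fin K, p i := by
        refine Finset.sum_congr rfl fun k _ => ?_
        have key : ∀ X : Fin K → Fin I,
            (∏ j, p (X j)) * (if X k = i then (1:ℝ) else 0)
              = ∏ j, (fun j x => if j = k then (if x = i then p x else 0) else p x) j (X j) := by
          intro X
          by_cases h : X k = i
          · simp only [h, if_true, mul_one]
            refine Finset.prod_congr rfl fun j _ => ?_
            by_cases hj : j = k <;> simp [hj, h]
          · simp only [h, if_false, mul_zero]
            refine (Finset.prod_eq_zero (Finset.mem_univ k) ?_).symm
            simp [h]
        simp_rw [key]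
        have := Finset.prod_univ_sum (fun _ : Fin K => (univ : Finset (Fin I)))
          (fun j x => if j = k then (if x = i then p x else 0) else p x)
        rw [Fintype.piFinset_univ] at this
        rw [← this]
        have : ∀ j : Fin K, (∑ x : Fin I, if j = k then (if x = i then p x else 0) else p x)
            = if j = k then p i else 1 := by
          intro j
          by_cases hj : j = k <;> simp [hj, hp1, Finset.sum_ite_eq']
        simp_rw [this, Finset.prod_ite_eq', Finset.mem_univ, if_true]
    _ = K * p i := by simp [mul_comm]

theorem expectedDissim_eq_aux (K I : ℕ) (hK : 1 ≤ K) (hI : 1 ≤ I)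
    (p q : Fin I → ℝ) (hp : ∀ i, 0 ≤ p i) (hp1 : ∑ i, p i = 1)
    (hq : ∀ i, 0 ≤ q i) (hq1 : ∑ i, q i = 1) :
    (∑ X₁ : Fin K → Fin I, ∑ X₂ : Fin K → Fin I,
    ((∏ k, p (X₁ k)) * (∏ k, q (X₂ k))) *
      (1 - (1 / (K : ℝ) ^ 2) *
        ∑ i : Fin I, ((Finset.univ.filter fun k => X₁ k = i).card : ℝ) *
          ((Finset.univ.filter fun k => X₂ k = i).card : ℝ)))
    = 1 - ∑ i, p i * q i := by
  have hK0 : (K : ℝ) ≠ 0 := Nat.cast_ne_zero.2 (by omega)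
  have key : ∀ X₁ X₂ : Fin K → Fin I,
      ((∏ k, p (X₁ k)) * (∏ k, q (X₂ k))) *
      (1 - (1 / (K : ℝ) ^ 2) *
        ∑ i : Fin I, ((Finset.univ.filter fun k => X₁ k = i).card : ℝ) *
          ((Finset.univ.filter fun k => X₂ k = i).card : ℝ))
      = (∏ k, p (X₁ k)) * (∏ k, q (X₂ k))
        - (1 / (K : ℝ) ^ 2) * ∑ i : Fin I,
            ((∏ k, p (X₁ k)) * ((Finset.univ.filter fun k => X₁ k = i).card : ℝ))
            * ((∏ k, q (X₂ k)) * ((Finset.univ.filter fun k => X₂ k = i).card : ℝ)) := by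
    intro X₁ X₂
    have hrw : ∑ i : Fin I,
        ((∏ k, p (X₁ k)) * ((Finset.univ.filter fun k => X₁ k = i).card : ℝ))
        * ((∏ k, q (X₂ k)) * ((Finset.univ.filter fun k => X₂ k = i).card : ℝ))
        = ((∏ k, p (X₁ k)) * (∏ k, q (X₂ k))) *
          ∑ i : Fin I, ((Finset.univ.filter fun k => X₁ k = i).card : ℝ) *
            ((Finset.univ.filter fun k => X₂ k = i).card : ℝ) := by
      rw [Finset.mul_sum]
      exact Finset.sum_congr rfl fun i _ => by ring
    rw [hrw]
    ring
  simp_rw [key, Finset.sum_sub_distrib, ← Finset.mul_sum, ← Finset.sum_mul]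
  rw [aux_one K I p hp1, aux_one K I q hq1, one_mul]
  congr 1
  have step1 : (∑ X₁ : Fin K → Fin I, ∑ X₂ : Fin K → Fin I, ∑ i : Fin I,
      (∏ k, p (X₁ k)) * ((Finset.univ.filter fun k => X₁ k = i).card : ℝ)
        * ((∏ k, q (X₂ k)) * ((Finset.univ.filter fun k => X₂ k = i).card : ℝ)))
      = ∑ i : Fin I,
        (∑ X₁ : Fin K → Fin I, (∏ k, p (X₁ k)) * ((Finset.univ.filter fun k => X₁ k = i).card : ℝ))
        * (∑ X₂ : Fin K → Fin I, (∏ k, q (X₂ k)) * ((Finset.univ.filter fun k => X₂ k = i).card : ℝ)) := by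
    calc _ = ∑ X₁ : Fin K → Fin I, ∑ i : Fin I, ∑ X₂ : Fin K → Fin I,
        (∏ k, p (X₁ k)) * ((Finset.univ.filter fun k => X₁ k = i).card : ℝ)
          * ((∏ k, q (X₂ k)) * ((Finset.univ.filter fun k => X₂ k = i).card : ℝ)) :=
        Finset.sum_congr rfl fun _ _ => Finset.sum_comm
      _ = ∑ i : Fin I, ∑ X₁ : Fin K → Fin I, ∑ X₂ : Fin K → Fin I,
        (∏ k, p (X₁ k)) * ((Finset.univ.filter fun k => X₁ k = i).card : ℝ)
          * ((∏ k, q (X₂ k)) * ((Finset.univ.filter fun k => X₂ k = i).card : ℝ)) :=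
        Finset.sum_comm
      _ = _ := Finset.sum_congr rfl fun i _ => (Finset.sum_mul_sum _ _ _ _).symm
  rw [step1]
  simp_rw [aux_count K I p hp1, aux_count K I q hq1]
  have h2 : ∀ i : Fin I, (K:ℝ) * p i * ((K:ℝ) * q i) = (K:ℝ)^2 * (p i * q i) := fun i => by ring
  simp_rw [h2, ← Finset.mul_sum]
  field_simp

/-- The expected dissimilarity between an unordered size-`K` draw from `p` and
an unordered size-`K` draw from `q` equals `1 - ⟨p, q⟩`. -/
theorem expectedDissim_eq (K I : ℕ) (hK : 1 ≤ K) (hI : 1 ≤ I)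
    (p q : Fin I → ℝ) (hp : ∀ i, 0 ≤ p i) (hp1 : ∑ i, p i = 1)
    (hq : ∀ i, 0 ≤ q i) (hq1 : ∑ i, q i = 1) :
    expectedDissim K I p q = 1 - ∑ i, p i * q i := by
  unfold expectedDissim
  exact expectedDissim_eq_aux K I hK hI p q hp hp1 hq hq1
end

section
/- Let K ≥ 1 and I ≥ 2K. The number of orbits of pairs of count vectors of size K on Fin I under the action of S₂ × S_I (where the nontrivial element of S₂ swaps the two count vectors of the pair and σ ∈ S_I, the permutation group of Fin I, relabels the index set of both count vectors simultaneously by precomposition with σ⁻¹) is equal to the number of orbits of pairs of count vectors of size K on Fin (2K) under the corresponding S₂ × S_{2K} action. In other words, |C^K_I| = |C^K_{2K}| whenever I ≥ 2K. -/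
open Finset

/-- The orbit of an ordered pair of count vectors `(g₁, g₂)` under the action of
`S₂ × S_I`: the `S₂` factor swaps the two count vectors, and a permutation
`σ ∈ S_I` relabels the index set of both count vectors by precomposition
with `σ⁻¹`. -/
def pairOrbit (I : ℕ) (x : (Fin I → ℕ) × (Fin I → ℕ)) :
    Set ((Fin I → ℕ) × (Fin I → ℕ)) :=
  {y | ∃ σ : Equiv.Perm (Fin I),
    y = (x.1 ∘ ⇑σ.symm, x.2 ∘ ⇑σ.symm) ∨ y = (x.2 ∘ ⇑σ.symm, x.1 ∘ ⇑σ.symm)}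

/-- The set of identity states `C^K_I`: the orbits of pairs of count vectors of
size `K` on `Fin I` under the `S₂ × S_I` action. -/
def IdentityStates (K I : ℕ) :=
  {S : Set ((Fin I → ℕ) × (Fin I → ℕ)) //
    ∃ x : (Fin I → ℕ) × (Fin I → ℕ),
      (∑ i, x.1 i = K) ∧ (∑ i, x.2 i = K) ∧ S = pairOrbit I x}

/-!
Padding a pair of count vectors on `Fin m` by zeros to `Fin n` (`m ≤ n`) induces a map on
orbits. Two functions are related by a relabelling exactly when all their fibres have the same
size, and padding changes only the size of the zero fibre, by `n - m` for every pair alike; so the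
induced map is injective. For `2K ≤ m` it is also surjective: a pair of size-`K` count vectors
is nonzero at no more than `2K` indices, and a relabelling moves all of them into `Fin m`.
-/

open Function

theorem Equiv.Perm.exists_mapsTo_of_card_le {α : Type*} (s t : Finset α) (h : #s ≤ #t) :
    ∃ σ : Equiv.Perm α, ∀ a ∈ s, σ a ∈ t := by
  obtain ⟨u, hut, hu⟩ := exists_subset_card_eq h
  obtain ⟨σ, hσ⟩ := Equiv.Perm.exists_map_finset_eq s u hu.symm
  exact ⟨σ, fun a ha => hut (hσ ▸ mem_map_of_mem _ ha)⟩

section Relabel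

variable {α β M : Type*} [Fintype α]

theorem exists_perm_comp_eq_iff_card_fiber_eq [DecidableEq M] {f g : α → M} :
    (∃ σ : Equiv.Perm α, f ∘ σ = g) ↔ ∀ m, #{a | f a = m} = #{a | g a = m} := by
  simp only [← Fintype.card_subtype]
  constructor
  · rintro ⟨σ, rfl⟩ m
    exact (Fintype.card_congr (σ.subtypeEquiv fun _ => Iff.rfl)).symm
  · intro h
    let e m : {a // f a = m} ≃ {a // g a = m} := Fintype.equivOfCardEq (h m)
    refine ⟨(Equiv.ofFiberEquiv e).symm, funext fun a => ?_⟩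
    obtain ⟨b, rfl⟩ := (Equiv.ofFiberEquiv e).surjective a
    simp only [comp_apply, Equiv.symm_apply_apply, Equiv.ofFiberEquiv_map]

variable [Fintype β]

theorem sum_extend_zero [AddCommMonoid M] (e : β ↪ α) (f : β → M) :
    ∑ a, extend e f 0 a = ∑ b, f b := by
  classical
  rw [← sum_subset (subset_univ (univ.map e)), sum_map]
  · simp [e.injective.extend_apply]
  · intro a _ ha
    exact extend_apply' (f := e) f 0 a fun ⟨b, hb⟩ => ha (mem_map.2 ⟨b, mem_univ _, hb⟩)

variable [Zero M]

theorem card_filter_extend_zero (e : β ↪ α) (f : β → M) (p : M → Prop) [DecidablePred p]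
    (hp : ¬p 0) : #{a | p (extend e f 0 a)} = #{b | p (f b)} := by
  classical
  rw [← card_map e]
  congr 1
  ext a
  by_cases ha : ∃ b, e b = a
  · obtain ⟨b, rfl⟩ := ha
    simp [e.injective.extend_apply]
  · simp only [mem_filter, mem_univ, true_and, mem_map, extend_apply' _ _ _ ha, Pi.zero_apply, hp,
      false_iff, not_exists, not_and]
    exact fun b _ hb => ha ⟨b, hb⟩

theorem exists_perm_extend_comp_eq_iff [DecidableEq M] (e : β ↪ α) (f g : β → M) :
    (∃ σ : Equiv.Perm α, extend e f 0 ∘ σ = extend e g 0) ↔ ∃ σ : Equiv.Perm β, f ∘ σ = g := by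
  classical
  simp only [exists_perm_comp_eq_iff_card_fiber_eq]
  refine forall_congr' fun m => ?_
  obtain rfl | hm := eq_or_ne m 0
  · -- both zero fibres grow by `card α - card β`
    have hf := card_filter_extend_zero e f (¬· = 0) (not_not.2 rfl)
    have hg := card_filter_extend_zero e g (¬· = 0) (not_not.2 rfl)
    have := card_filter_add_card_filter_not (s := univ) (fun a => extend e f 0 a = 0)
    have := card_filter_add_card_filter_not (s := univ) (fun a => extend e g 0 a = 0)
    have := card_filter_add_card_filter_not (s := univ) (fun b => f b = 0)
    have := card_filter_add_card_filter_not (s := univ) (fun b => g b = 0)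
    omega
  · rw [card_filter_extend_zero e f (· = m) hm.symm, card_filter_extend_zero e g (· = m) hm.symm]

theorem exists_perm_comp_eq_extend (e : β ↪ α) (f : α → M) [DecidablePred fun a => f a ≠ 0]
    (h : #{a | f a ≠ 0} ≤ Fintype.card β) :
    ∃ (σ : Equiv.Perm α) (g : β → M), f ∘ σ = extend e g 0 := by
  obtain ⟨σ, hσ⟩ := Equiv.Perm.exists_mapsTo_of_card_le {a | f a ≠ 0} (univ.map e) (by simpa)
  refine ⟨σ.symm, f ∘ σ.symm ∘ e, funext fun a => ?_⟩
  by_cases ha : ∃ b, e b = a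
  · obtain ⟨b, rfl⟩ := ha
    simp [e.injective.extend_apply]
  · rw [extend_apply' _ _ _ ha, Pi.zero_apply, comp_apply]
    by_contra hne
    obtain ⟨b, -, hb⟩ := mem_map.1 (hσ _ (mem_filter.2 ⟨mem_univ _, hne⟩))
    exact ha ⟨b, by simpa using hb⟩

end Relabel

theorem Function.prod_extend_zero {α β M N : Type*} [Zero M] [Zero N] (e : β → α) (f : β → M)
    (g : β → N) :
    Function.prod (extend e f 0) (extend e g 0) = extend e (Function.prod f g) 0 := by
  classical
  funext a
  simp only [extend_def, Function.prod_apply]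
  split_ifs <;> rfl

theorem card_filter_ne_zero_le_sum {α : Type*} [Fintype α] (f : α → ℕ) :
    #{a | f a ≠ 0} ≤ ∑ a, f a :=
  calc #{a | f a ≠ 0} ≤ ∑ a ∈ {a | f a ≠ 0}, f a := by
        simpa using card_nsmul_le_sum {a | f a ≠ 0} f 1 fun _ ha =>
          Nat.one_le_iff_ne_zero.2 (mem_filter.1 ha).2
    _ ≤ ∑ a, f a := sum_le_sum_of_subset (subset_univ _)

theorem Nat.card_range_eq_of_comp {A B C D : Type*} {f : A → C} {g : B → D} (φ : A → B)
    (hφ : ∀ a a', g (φ a) = g (φ a') ↔ f a = f a') (hg : ∀ b, ∃ a, g (φ a) = g b) :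
    Nat.card (Set.range f) = Nat.card (Set.range g) := by
  have hrange : Set.range (g ∘ φ) = Set.range g := by
    ext d
    constructor
    · rintro ⟨a, rfl⟩
      exact ⟨φ a, rfl⟩
    · rintro ⟨b, rfl⟩
      exact hg b
  rw [← hrange]
  exact Nat.card_congr ((Setoid.quotientKerEquivRange f).symm.trans
    ((Quotient.congrRight fun _ _ => by simp [Setoid.ker_def, hφ]).trans
      (Setoid.quotientKerEquivRange (g ∘ φ))))

section CountVectors

variable {K m n : ℕ}

theorem mem_pairOrbit_iff {x y : (Fin n → ℕ) × (Fin n → ℕ)} :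
    y ∈ pairOrbit n x ↔
      (∃ σ : Equiv.Perm (Fin n), Function.prod x.1 x.2 ∘ σ = Function.prod y.1 y.2) ∨
        ∃ σ : Equiv.Perm (Fin n), Function.prod x.2 x.1 ∘ σ = Function.prod y.1 y.2 := by
  simp only [pairOrbit, Set.mem_ofPred_eq, exists_or, prod_comp, prod_inj, Prod.ext_iff, eq_comm]
  refine or_congr ?_ ?_ <;>
    exact ⟨fun ⟨σ, h⟩ => ⟨σ.symm, h⟩, fun ⟨σ, h⟩ => ⟨σ.symm, by rwa [Equiv.symm_symm]⟩⟩

theorem pairOrbit_symm {x y : (Fin n → ℕ) × (Fin n → ℕ)} (h : y ∈ pairOrbit n x) :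
    x ∈ pairOrbit n y := by
  obtain ⟨σ, rfl | rfl⟩ := h
  exacts [⟨σ.symm, Or.inl (by simp [comp_assoc])⟩, ⟨σ.symm, Or.inr (by simp [comp_assoc])⟩]

theorem pairOrbit_trans {x y z : (Fin n → ℕ) × (Fin n → ℕ)} (hxy : y ∈ pairOrbit n x)
    (hyz : z ∈ pairOrbit n y) : z ∈ pairOrbit n x := by
  obtain ⟨σ, rfl | rfl⟩ := hxy <;> obtain ⟨τ, rfl | rfl⟩ := hyz
  exacts [⟨σ.trans τ, Or.inl rfl⟩, ⟨σ.trans τ, Or.inr rfl⟩, ⟨σ.trans τ, Or.inr rfl⟩,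
    ⟨σ.trans τ, Or.inl rfl⟩]

theorem pairOrbit_eq_iff {x y : (Fin n → ℕ) × (Fin n → ℕ)} :
    pairOrbit n x = pairOrbit n y ↔ y ∈ pairOrbit n x := by
  refine ⟨fun h => h ▸ ⟨1, Or.inl rfl⟩, fun h => Set.ext fun z => ?_⟩
  exact ⟨pairOrbit_trans (pairOrbit_symm h), pairOrbit_trans h⟩

noncomputable def padPair (h : m ≤ n) (x : (Fin m → ℕ) × (Fin m → ℕ)) :
    (Fin n → ℕ) × (Fin n → ℕ) :=
  (extend (Fin.castLEEmb h) x.1 0, extend (Fin.castLEEmb h) x.2 0)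

theorem padPair_mem_pairOrbit_iff (h : m ≤ n) {x y : (Fin m → ℕ) × (Fin m → ℕ)} :
    padPair h y ∈ pairOrbit n (padPair h x) ↔ y ∈ pairOrbit m x := by
  simp only [mem_pairOrbit_iff, padPair, prod_extend_zero, exists_perm_extend_comp_eq_iff]

theorem pairOrbit_padPair_eq_iff (h : m ≤ n) {x y : (Fin m → ℕ) × (Fin m → ℕ)} :
    pairOrbit n (padPair h x) = pairOrbit n (padPair h y) ↔ pairOrbit m x = pairOrbit m y := by
  rw [pairOrbit_eq_iff, pairOrbit_eq_iff, padPair_mem_pairOrbit_iff]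

theorem exists_pairOrbit_padPair_eq (hKm : 2 * K ≤ m) (h : m ≤ n)
    (x : (Fin n → ℕ) × (Fin n → ℕ)) (hx₁ : ∑ i, x.1 i = K) (hx₂ : ∑ i, x.2 i = K) :
    ∃ y : (Fin m → ℕ) × (Fin m → ℕ), ∑ i, y.1 i = K ∧ ∑ i, y.2 i = K ∧
      pairOrbit n (padPair h y) = pairOrbit n x := by
  classical
  have hsupp : #{i | Function.prod x.1 x.2 i ≠ 0} ≤ Fintype.card (Fin m) :=
    calc #{i | Function.prod x.1 x.2 i ≠ 0} = #{i | (x.1 + x.2) i ≠ 0} := by simp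
      _ ≤ ∑ i, (x.1 + x.2) i := card_filter_ne_zero_le_sum _
      _ ≤ Fintype.card (Fin m) := by simp [sum_add_distrib, hx₁, hx₂]; omega
  obtain ⟨σ, g, hσ⟩ := exists_perm_comp_eq_extend (Fin.castLEEmb h) _ hsupp
  rw [prod_comp, ← prod_fst_comp_snd_comp g, ← prod_extend_zero, prod_inj] at hσ
  refine ⟨(Prod.fst ∘ g, Prod.snd ∘ g), ?_, ?_, ?_⟩
  · rw [← sum_extend_zero (Fin.castLEEmb h), ← hσ.1, ← hx₁]
    exact Equiv.sum_comp σ x.1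
  · rw [← sum_extend_zero (Fin.castLEEmb h), ← hσ.2, ← hx₂]
    exact Equiv.sum_comp σ x.2
  · refine (pairOrbit_eq_iff.2 ⟨σ.symm, Or.inl ?_⟩).symm
    simp only [padPair, ← hσ.1, ← hσ.2, Equiv.symm_symm]

def CountVectorPairs (K n : ℕ) : Type :=
  {x : (Fin n → ℕ) × (Fin n → ℕ) // ∑ i, x.1 i = K ∧ ∑ i, x.2 i = K}

noncomputable def CountVectorPairs.pad (h : m ≤ n) (x : CountVectorPairs K m) :
    CountVectorPairs K n :=
  ⟨padPair h x.1, by simpa only [padPair, sum_extend_zero] using x.2⟩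

theorem card_identityStates_eq_card_range (K n : ℕ) :
    Nat.card (IdentityStates K n) =
      Nat.card (Set.range fun x : CountVectorPairs K n => pairOrbit n x.1) :=
  Nat.card_congr <| Equiv.subtypeEquivRight fun _ =>
    ⟨fun ⟨x, h₁, h₂, hS⟩ => ⟨⟨x, h₁, h₂⟩, hS.symm⟩, fun ⟨⟨x, h₁, h₂⟩, hS⟩ => ⟨x, h₁, h₂, hS.symm⟩⟩

end CountVectors

theorem card_identityStates_stabilizes_general (K I : ℕ) (hI : 2 * K ≤ I) :
    Nat.card (IdentityStates K I) = Nat.card (IdentityStates K (2 * K)) := by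
  rw [card_identityStates_eq_card_range, card_identityStates_eq_card_range]
  refine (Nat.card_range_eq_of_comp (CountVectorPairs.pad hI)
    (fun _ _ => pairOrbit_padPair_eq_iff hI) fun x => ?_).symm
  obtain ⟨y, hy₁, hy₂, hy⟩ := exists_pairOrbit_padPair_eq le_rfl hI x.1 x.2.1 x.2.2
  exact ⟨⟨y, hy₁, hy₂⟩, hy⟩

/-- For `I ≥ 2K`, the number of identity states `|C^K_I|` equals `|C^K_{2K}|`. -/
theorem card_identityStates_stabilizes (K I : ℕ) (hK : 1 ≤ K) (hI : 2 * K ≤ I) :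
    Nat.card (IdentityStates K I) = Nat.card (IdentityStates K (2 * K)) :=
  card_identityStates_stabilizes_general K I hI
end

section
/- For K = 2 and any I ≥ 4, the number of identity states equals 7; that is, the number of orbits of pairs of count vectors of size 2 on Fin I under the S₂ × S_I action is 7. -/
open Finset

/-! A count vector of size 2 is `e a + e b` for points `a, b`, so a pair of them is described by
four points `a, b | c, d`, and its orbit only depends on the coincidences among them, up to
swapping `a, b`, swapping `c, d` and swapping the two sides. This leaves seven patterns, each
realised once `I ≥ 4`. They lie in different orbits because `(∑ g₁² + ∑ g₂², ∑ g₁ g₂)` is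
invariant under the action and takes seven distinct values on them. -/

lemma injective_vecThree {α : Type*} {a b c : α} (hab : a ≠ b) (hac : a ≠ c) (hbc : b ≠ c) :
    Function.Injective ![a, b, c] := by
  intro i j
  fin_cases i <;> fin_cases j <;> simp [hab, hac, hbc, hab.symm, hac.symm, hbc.symm]

lemma injective_vecFour {α : Type*} {a b c d : α} (hab : a ≠ b) (hac : a ≠ c) (had : a ≠ d)
    (hbc : b ≠ c) (hbd : b ≠ d) (hcd : c ≠ d) : Function.Injective ![a, b, c, d] := by
  intro i j
  fin_cases i <;> fin_cases j <;>
    simp [hab, hac, had, hbc, hbd, hcd, hab.symm, hac.symm, had.symm, hbc.symm, hbd.symm, hcd.symm]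

section Draw
variable {α : Type*} [DecidableEq α]

def draw (a b : α) : α → ℕ := Pi.single a 1 + Pi.single b 1

lemma draw_comm (a b : α) : draw a b = draw b a := add_comm _ _

lemma draw_comp_symm (σ : Equiv.Perm α) (a b : α) :
    draw a b ∘ σ.symm = draw (σ a) (σ b) := by
  funext i; simp [draw, Pi.single_apply, Equiv.symm_apply_eq]

variable [Fintype α]

lemma sum_draw (a b : α) : ∑ i, draw a b i = 2 := by
  simp [draw, sum_add_distrib]

lemma sum_draw_mul_draw (a b c d : α) :
    ∑ i, draw a b i * draw c d i =
      (if a = c then 1 else 0) + (if a = d then 1 else 0) +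
        (if b = c then 1 else 0) + (if b = d then 1 else 0) := by
  simp [draw, Pi.single_apply, mul_add, sum_add_distrib, eq_comm]
  ring

lemma exists_eq_draw_of_sum_eq_two {g : α → ℕ} (hg : ∑ i, g i = 2) :
    ∃ a b, g = draw a b := by
  -- `g` is the multiplicity function of a multiset of cardinality 2
  set f := Finsupp.equivFunOnFinite.symm g
  have hcard : Multiset.card (Finsupp.toMultiset f) = 2 := by
    simpa [Finsupp.card_toMultiset, Finsupp.sum_fintype, f] using hg
  obtain ⟨a, b, hab⟩ := Multiset.card_eq_two.mp hcard
  refine ⟨a, b, funext fun i => ?_⟩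
  have hgi : g i = Multiset.count i {a, b} := by rw [← hab, Finsupp.count_toMultiset]; rfl
  simp [hgi, draw, Pi.single_apply, Multiset.count_cons, Multiset.count_singleton, add_comm]

end Draw

section PairOrbit
variable {I : ℕ}

lemma mem_pairOrbit_draw {a b c d a' b' c' d' : Fin I} (σ : Equiv.Perm (Fin I))
    (ha : σ a = a') (hb : σ b = b') (hc : σ c = c') (hd : σ d = d') :
    (draw a' b', draw c' d') ∈ pairOrbit I (draw a b, draw c d) :=
  ⟨σ, Or.inl (by simp [draw_comp_symm, ha, hb, hc, hd])⟩

lemma mem_pairOrbit_self (x : (Fin I → ℕ) × (Fin I → ℕ)) : x ∈ pairOrbit I x :=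
  ⟨1, Or.inl rfl⟩

lemma swap_mem_pairOrbit (x : (Fin I → ℕ) × (Fin I → ℕ)) : x.swap ∈ pairOrbit I x :=
  ⟨1, Or.inr rfl⟩

lemma mem_pairOrbit_comm {x y : (Fin I → ℕ) × (Fin I → ℕ)} (h : y ∈ pairOrbit I x) :
    x ∈ pairOrbit I y := by
  obtain ⟨σ, rfl | rfl⟩ := h
  · exact ⟨σ.symm, Or.inl (by ext <;> simp)⟩
  · exact ⟨σ.symm, Or.inr (by ext <;> simp)⟩

lemma mem_pairOrbit_trans {x y z : (Fin I → ℕ) × (Fin I → ℕ)}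
    (hzy : z ∈ pairOrbit I y) (hyx : y ∈ pairOrbit I x) : z ∈ pairOrbit I x := by
  obtain ⟨τ, rfl | rfl⟩ := hzy <;> obtain ⟨σ, rfl | rfl⟩ := hyx
  · exact ⟨τ * σ, Or.inl (by ext <;> simp [Equiv.Perm.mul_def])⟩
  · exact ⟨τ * σ, Or.inr (by ext <;> simp [Equiv.Perm.mul_def])⟩
  · exact ⟨τ * σ, Or.inr (by ext <;> simp [Equiv.Perm.mul_def])⟩
  · exact ⟨τ * σ, Or.inl (by ext <;> simp [Equiv.Perm.mul_def])⟩

lemma pairOrbit_eq_of_mem {x y : (Fin I → ℕ) × (Fin I → ℕ)} (h : y ∈ pairOrbit I x) :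
    pairOrbit I y = pairOrbit I x :=
  Set.ext fun _ => ⟨(mem_pairOrbit_trans · h), (mem_pairOrbit_trans · (mem_pairOrbit_comm h))⟩

def pairInvariant (x : (Fin I → ℕ) × (Fin I → ℕ)) : ℕ × ℕ :=
  (∑ i, x.1 i * x.1 i + ∑ i, x.2 i * x.2 i, ∑ i, x.1 i * x.2 i)

lemma pairInvariant_eq_of_mem {x y : (Fin I → ℕ) × (Fin I → ℕ)} (h : y ∈ pairOrbit I x) :
    pairInvariant y = pairInvariant x := by
  obtain ⟨σ, rfl | rfl⟩ := h <;>
    simp only [pairInvariant, Function.comp_apply, Equiv.sum_comp σ.symm (fun i => _ * _)]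
  rw [add_comm]
  simp only [mul_comm]

end PairOrbit

section Representatives
variable {I : ℕ} (q : Fin 4 ↪ Fin I)

def orbitRep : Fin 7 → (Fin I → ℕ) × (Fin I → ℕ) :=
  ![(draw (q 0) (q 0), draw (q 0) (q 0)), (draw (q 0) (q 0), draw (q 1) (q 1)),
    (draw (q 0) (q 0), draw (q 0) (q 1)), (draw (q 0) (q 0), draw (q 1) (q 2)),
    (draw (q 0) (q 1), draw (q 0) (q 1)), (draw (q 0) (q 1), draw (q 0) (q 2)),
    (draw (q 0) (q 1), draw (q 2) (q 3))]

lemma exists_perm_apply_eq {n : ℕ} (hn : n ≤ 4) {t : Fin n → Fin I}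
    (ht : Function.Injective t) :
    ∃ σ : Equiv.Perm (Fin I), ∀ i, σ (q (Fin.castLE hn i)) = t i :=
  Equiv.Perm.exists_extending_pair _ t (q.injective.comp (Fin.castLE_injective hn)) ht

lemma exists_mem_pairOrbit_orbitRep_draw_self (a c d : Fin I) :
    ∃ k, (draw a a, draw c d) ∈ pairOrbit I (orbitRep q k) := by
  obtain rfl | hcd := eq_or_ne c d
  · obtain rfl | hac := eq_or_ne a c
    · have h := Equiv.swap_apply_left (q 0) a
      exact ⟨0, mem_pairOrbit_draw _ h h h h⟩
    · obtain ⟨σ, hσ⟩ := exists_perm_apply_eq q (by omega) (injective_pair_iff_ne.mpr hac)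
      exact ⟨1, mem_pairOrbit_draw σ (hσ 0) (hσ 0) (hσ 1) (hσ 1)⟩
  obtain rfl | hac := eq_or_ne a c
  · obtain ⟨σ, hσ⟩ := exists_perm_apply_eq q (by omega) (injective_pair_iff_ne.mpr hcd)
    exact ⟨2, mem_pairOrbit_draw σ (hσ 0) (hσ 0) (hσ 0) (hσ 1)⟩
  obtain rfl | had := eq_or_ne a d
  · obtain ⟨σ, hσ⟩ := exists_perm_apply_eq q (by omega) (injective_pair_iff_ne.mpr hcd.symm)
    rw [draw_comm c]
    exact ⟨2, mem_pairOrbit_draw σ (hσ 0) (hσ 0) (hσ 0) (hσ 1)⟩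
  obtain ⟨σ, hσ⟩ := exists_perm_apply_eq q (by omega) (injective_vecThree hac had hcd)
  exact ⟨3, mem_pairOrbit_draw σ (hσ 0) (hσ 0) (hσ 1) (hσ 2)⟩

lemma exists_mem_pairOrbit_orbitRep_of_ne {a b c d : Fin I} (hab : a ≠ b) (hcd : c ≠ d) :
    ∃ k, (draw a b, draw c d) ∈ pairOrbit I (orbitRep q k) := by
  obtain rfl | hac := eq_or_ne a c
  · obtain rfl | hbd := eq_or_ne b d
    · obtain ⟨σ, hσ⟩ := exists_perm_apply_eq q (by omega) (injective_pair_iff_ne.mpr hab)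
      exact ⟨4, mem_pairOrbit_draw σ (hσ 0) (hσ 1) (hσ 0) (hσ 1)⟩
    · obtain ⟨σ, hσ⟩ := exists_perm_apply_eq q (by omega) (injective_vecThree hab hcd hbd)
      exact ⟨5, mem_pairOrbit_draw σ (hσ 0) (hσ 1) (hσ 0) (hσ 2)⟩
  rw [draw_comm c]
  obtain rfl | had := eq_or_ne a d
  · obtain rfl | hbc := eq_or_ne b c
    · obtain ⟨σ, hσ⟩ := exists_perm_apply_eq q (by omega) (injective_pair_iff_ne.mpr hab)
      exact ⟨4, mem_pairOrbit_draw σ (hσ 0) (hσ 1) (hσ 0) (hσ 1)⟩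
    · obtain ⟨σ, hσ⟩ := exists_perm_apply_eq q (by omega) (injective_vecThree hab hac hbc)
      exact ⟨5, mem_pairOrbit_draw σ (hσ 0) (hσ 1) (hσ 0) (hσ 2)⟩
  rw [draw_comm a]
  obtain rfl | hbc := eq_or_ne b c
  · obtain ⟨σ, hσ⟩ := exists_perm_apply_eq q (by omega) (injective_vecThree hab.symm hcd had)
    rw [draw_comm d]
    exact ⟨5, mem_pairOrbit_draw σ (hσ 0) (hσ 1) (hσ 0) (hσ 2)⟩
  obtain rfl | hbd := eq_or_ne b d
  · obtain ⟨σ, hσ⟩ := exists_perm_apply_eq q (by omega) (injective_vecThree hab.symm hbc hac)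
    exact ⟨5, mem_pairOrbit_draw σ (hσ 0) (hσ 1) (hσ 0) (hσ 2)⟩
  obtain ⟨σ, hσ⟩ := exists_perm_apply_eq q (by omega)
    (injective_vecFour hab.symm hbd hbc had hac hcd.symm)
  exact ⟨6, mem_pairOrbit_draw σ (hσ 0) (hσ 1) (hσ 2) (hσ 3)⟩

lemma exists_mem_pairOrbit_orbitRep {x : (Fin I → ℕ) × (Fin I → ℕ)}
    (hx₁ : ∑ i, x.1 i = 2) (hx₂ : ∑ i, x.2 i = 2) :
    ∃ k, x ∈ pairOrbit I (orbitRep q k) := by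
  obtain ⟨g₁, g₂⟩ := x
  obtain ⟨a, b, rfl⟩ := exists_eq_draw_of_sum_eq_two hx₁
  obtain ⟨c, d, rfl⟩ := exists_eq_draw_of_sum_eq_two hx₂
  obtain rfl | hab := eq_or_ne a b
  · exact exists_mem_pairOrbit_orbitRep_draw_self q a c d
  obtain rfl | hcd := eq_or_ne c d
  · obtain ⟨k, hk⟩ := exists_mem_pairOrbit_orbitRep_draw_self q c a b
    exact ⟨k, mem_pairOrbit_trans (swap_mem_pairOrbit (draw c c, draw a b)) hk⟩
  exact exists_mem_pairOrbit_orbitRep_of_ne q hab hcd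

def orbitRepInvariant : Fin 7 → ℕ × ℕ :=
  ![(8, 4), (8, 0), (6, 2), (6, 0), (4, 2), (4, 1), (4, 0)]

lemma orbitRepInvariant_injective : Function.Injective orbitRepInvariant := by
  decide

lemma pairInvariant_orbitRep (k : Fin 7) : pairInvariant (orbitRep q k) = orbitRepInvariant k := by
  fin_cases k <;>
    simp [orbitRep, orbitRepInvariant, pairInvariant, sum_draw_mul_draw, q.injective.eq_iff]

lemma sum_orbitRep (k : Fin 7) :
    (∑ i, (orbitRep q k).1 i = 2) ∧ ∑ i, (orbitRep q k).2 i = 2 := by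
  fin_cases k <;> exact ⟨sum_draw _ _, sum_draw _ _⟩

def orbitRepState (k : Fin 7) : IdentityStates 2 I :=
  ⟨pairOrbit I (orbitRep q k), orbitRep q k, (sum_orbitRep q k).1, (sum_orbitRep q k).2, rfl⟩

lemma orbitRepState_bijective : Function.Bijective (orbitRepState q) := by
  constructor
  · intro j k hjk
    have horbit : pairOrbit I (orbitRep q j) = pairOrbit I (orbitRep q k) :=
      congrArg Subtype.val hjk
    have hmem : orbitRep q j ∈ pairOrbit I (orbitRep q k) := horbit ▸ mem_pairOrbit_self _
    apply orbitRepInvariant_injective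
    rw [← pairInvariant_orbitRep q, ← pairInvariant_orbitRep q]
    exact pairInvariant_eq_of_mem hmem
  · rintro ⟨_, x, hx₁, hx₂, rfl⟩
    obtain ⟨k, hk⟩ := exists_mem_pairOrbit_orbitRep q hx₁ hx₂
    exact ⟨k, Subtype.ext (pairOrbit_eq_of_mem hk).symm⟩

end Representatives

/-- For `K = 2` and `I ≥ 4`, there are exactly 7 identity states. -/
theorem card_identityStates_two (I : ℕ) (hI : 4 ≤ I) :
    Nat.card (IdentityStates 2 I) = 7 :=
  Nat.card_eq_of_equiv_fin (Equiv.ofBijective _ (orbitRepState_bijective (Fin.castLEEmb hI))).symm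
end

section
/- For K = 3 and any I ≥ 6, the number of identity states equals 21; that is, the number of orbits of pairs of count vectors of size 3 on Fin I under the S₂ × S_I action is 21. -/
open Finset

/-!
The `S_I`-orbit of a pair `(g₁, g₂)` is determined by its joint profile, the multiset of the `I`
points `(g₁ i, g₂ i)` of `ℕ × ℕ`; the profiles of pairs of count vectors are exactly the
`I`-element multisets with sum `(K, K)`, and the `S₂` factor swaps the coordinates of every point.
Hence the identity states correspond to the unordered pairs `{m, swap m}` of such multisets.
A multiset of `I ≥ 2K` points with sum `(K, K)` must contain `(0, 0)`, since every other point
contributes at least `1` to the total `2K`; so adding a zero point is a bijection from profiles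
of size `2K` onto profiles of size `I`, and the count stabilises. For `K = 3` it is computed by
enumerating the `31` profiles of size `6`, which fall into `21` swap classes.
-/

theorem Fintype.exists_perm_of_map_univ_val_eq {ι β : Type*} [Fintype ι] [DecidableEq β]
    {f g : ι → β} (h : univ.val.map f = univ.val.map g) : ∃ σ : Equiv.Perm ι, f = g ∘ σ := by
  have hfib : ∀ b, Fintype.card {i // f i = b} = Fintype.card {i // g i = b} := fun b => by
    have := congrArg (Multiset.count b) h
    simp only [Multiset.count_map] at this
    simp only [Fintype.card_subtype, card_def, filter_val]
    convert this using 3 <;> exact eq_comm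
  let σ := Equiv.ofFiberEquiv fun b => Fintype.equivOfCardEq (hfib b)
  exact ⟨σ, funext fun i => (Equiv.ofFiberEquiv_map _ i).symm⟩

theorem Nat.card_image_fiber {α β : Type*} (f : α → β) (A : Set α) :
    Nat.card ((fun a => f ⁻¹' {f a}) '' A) = Nat.card (f '' A) := by
  rw [show (fun a => f ⁻¹' {f a}) = (fun b => f ⁻¹' {b}) ∘ f from rfl, Set.image_comp]
  refine Nat.card_image_of_injOn ?_
  rintro _ ⟨a, -, rfl⟩ _ ⟨a', -, rfl⟩ h
  exact (congrArg (a ∈ ·) h).mp rfl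

section MultisetsWithSum

variable {M : Type*} [AddCommMonoid M] [PartialOrder M] [CanonicallyOrderedAdd M] [Sub M]
  [OrderedSub M] [AddLeftReflectLE M] [LocallyFiniteOrderBot M] [DecidableEq M]

def multisetsWithSum : ℕ → M → Finset (Multiset M)
  | 0, v => if v = 0 then {0} else ∅
  | n + 1, v => (Iic v).biUnion fun p => (multisetsWithSum n (v - p)).image (p ::ₘ ·)

theorem mem_multisetsWithSum {n : ℕ} {v : M} {m : Multiset M} :
    m ∈ multisetsWithSum n v ↔ Multiset.card m = n ∧ m.sum = v := by
  induction n generalizing v m with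
  | zero => aesop (add simp multisetsWithSum)
  | succ n ih =>
    simp only [multisetsWithSum, mem_biUnion, mem_Iic, mem_image, ih, Multiset.card_eq_succ_iff]
    constructor
    · rintro ⟨p, hp, t, ⟨rfl, hsum⟩, rfl⟩
      exact ⟨⟨p, t, rfl, rfl⟩, by simp [hsum, add_tsub_cancel_of_le hp]⟩
    · rintro ⟨⟨p, t, rfl, rfl⟩, rfl⟩
      exact ⟨p, by simp, t, ⟨rfl, by simp [add_tsub_cancel_left]⟩, rfl⟩

end MultisetsWithSum

theorem Multiset.card_le_sum_fst_add_sum_snd {m : Multiset (ℕ × ℕ)} (h : (0 : ℕ × ℕ) ∉ m) :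
    Multiset.card m ≤ m.sum.1 + m.sum.2 := by
  induction m using Multiset.induction_on with
  | empty => simp
  | cons p m ih =>
    simp only [Multiset.mem_cons, not_or] at h
    have hp : 1 ≤ p.1 + p.2 := by
      by_contra! hlt
      exact h.1 (Prod.ext (by omega : 0 = p.1) (by omega : 0 = p.2))
    simp only [Multiset.card_cons, Multiset.sum_cons, Prod.fst_add, Prod.snd_add]
    have := ih h.2
    omega

theorem multisetsWithSum_succ_of_le {n : ℕ} {v : ℕ × ℕ} (h : v.1 + v.2 ≤ n) :
    multisetsWithSum (n + 1) v = (multisetsWithSum n v).image (0 ::ₘ ·) := by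
  ext m
  simp only [mem_image, mem_multisetsWithSum]
  constructor
  · rintro ⟨hcard, rfl⟩
    have h0 : (0 : ℕ × ℕ) ∈ m := by
      by_contra h0
      have := Multiset.card_le_sum_fst_add_sum_snd h0
      omega
    obtain ⟨t, rfl⟩ := Multiset.exists_cons_of_mem h0
    exact ⟨t, ⟨by simpa using hcard, by simp⟩, rfl⟩
  · rintro ⟨t, ⟨rfl, rfl⟩, rfl⟩
    simp

def swapClass (m : Multiset (ℕ × ℕ)) : Sym2 (Multiset (ℕ × ℕ)) := s(m, m.map Prod.swap)

theorem swapClass_eq_swapClass_iff {m m' : Multiset (ℕ × ℕ)} :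
    swapClass m = swapClass m' ↔ m = m' ∨ m = m'.map Prod.swap := by
  have hinv : ∀ m : Multiset (ℕ × ℕ), (m.map Prod.swap).map Prod.swap = m := by
    simp [Multiset.map_map]
  simp only [swapClass, Sym2.eq_iff]
  constructor
  · rintro (⟨h, -⟩ | ⟨h, -⟩)
    exacts [Or.inl h, Or.inr h]
  · rintro (rfl | rfl)
    exacts [Or.inl ⟨rfl, rfl⟩, Or.inr ⟨rfl, hinv m'⟩]

theorem swapClass_cons_zero (m : Multiset (ℕ × ℕ)) :
    swapClass (0 ::ₘ m) = Sym2.map (0 ::ₘ ·) (swapClass m) := by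
  simp [swapClass]

theorem card_image_swapClass_multisetsWithSum_of_le {n : ℕ} {v : ℕ × ℕ} (h : v.1 + v.2 ≤ n) :
    ((multisetsWithSum n v).image swapClass).card =
      ((multisetsWithSum (v.1 + v.2) v).image swapClass).card := by
  induction n, h using Nat.le_induction with
  | base => rfl
  | succ n hn ih =>
    rw [multisetsWithSum_succ_of_le hn, image_image, ← ih,
      show swapClass ∘ (0 ::ₘ ·) = Sym2.map (0 ::ₘ ·) ∘ swapClass from funext swapClass_cons_zero,
      ← image_image,
      card_image_of_injective _ (Sym2.map.injective fun _ _ => (Multiset.cons_inj_right 0).1)]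

section Profile

variable {I : ℕ}

def profile (x : (Fin I → ℕ) × (Fin I → ℕ)) : Multiset (ℕ × ℕ) :=
  univ.val.map fun i => (x.1 i, x.2 i)

theorem card_profile (x : (Fin I → ℕ) × (Fin I → ℕ)) : Multiset.card (profile x) = I := by
  simp [profile]

theorem sum_profile (x : (Fin I → ℕ) × (Fin I → ℕ)) :
    (profile x).sum = (∑ i, x.1 i, ∑ i, x.2 i) := by
  change ∑ i, (x.1 i, x.2 i) = _
  ext <;> simp [Prod.fst_sum, Prod.snd_sum]

theorem profile_swap (x : (Fin I → ℕ) × (Fin I → ℕ)) :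
    profile (x.2, x.1) = (profile x).map Prod.swap := by
  simp [profile, Function.comp_def]

theorem profile_eq_profile_iff {x y : (Fin I → ℕ) × (Fin I → ℕ)} :
    profile y = profile x ↔ ∃ σ : Equiv.Perm (Fin I), y = (x.1 ∘ σ.symm, x.2 ∘ σ.symm) := by
  constructor
  · intro h
    obtain ⟨σ, hσ⟩ := Fintype.exists_perm_of_map_univ_val_eq h
    refine ⟨σ.symm, ?_⟩
    ext i
    exacts [congrArg Prod.fst (congrFun hσ i), congrArg Prod.snd (congrFun hσ i)]
  · rintro ⟨σ, rfl⟩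
    change univ.val.map ((fun i => (x.1 i, x.2 i)) ∘ σ.symm) = _
    rw [← Multiset.map_map, Multiset.map_univ_val_equiv]
    rfl

theorem exists_profile_eq {m : Multiset (ℕ × ℕ)} (hm : Multiset.card m = I) :
    ∃ x : (Fin I → ℕ) × (Fin I → ℕ), profile x = m := by
  obtain ⟨l, rfl⟩ := Quot.exists_rep m
  subst hm
  refine ⟨(fun i => (l.get i).1, fun i => (l.get i).2), ?_⟩
  change univ.val.map l.get = l
  rw [Fin.univ_val_map, List.ofFn_get]

theorem mem_pairOrbit_iff_s7 {x y : (Fin I → ℕ) × (Fin I → ℕ)} :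
    y ∈ pairOrbit I x ↔ swapClass (profile y) = swapClass (profile x) := by
  rw [swapClass_eq_swapClass_iff, ← profile_swap, profile_eq_profile_iff, profile_eq_profile_iff,
    ← exists_or]
  rfl

theorem image_profile_eq_multisetsWithSum (K : ℕ) :
    profile '' {x : (Fin I → ℕ) × (Fin I → ℕ) | ∑ i, x.1 i = K ∧ ∑ i, x.2 i = K} =
      multisetsWithSum I (K, K) := by
  ext m
  simp only [Set.mem_image, Set.mem_ofPred_eq, mem_coe, mem_multisetsWithSum]
  constructor
  · rintro ⟨x, ⟨h₁, h₂⟩, rfl⟩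
    exact ⟨card_profile x, by rw [sum_profile, h₁, h₂]⟩
  · rintro ⟨hcard, hsum⟩
    obtain ⟨x, rfl⟩ := exists_profile_eq hcard
    rw [sum_profile, Prod.mk.injEq] at hsum
    exact ⟨x, hsum, rfl⟩

end Profile

theorem card_identityStates (K I : ℕ) :
    Nat.card (IdentityStates K I) = ((multisetsWithSum I (K, K)).image swapClass).card := by
  set A := {x : (Fin I → ℕ) × (Fin I → ℕ) | ∑ i, x.1 i = K ∧ ∑ i, x.2 i = K}
  have hstates : IdentityStates K I ≃ pairOrbit I '' A :=
    Equiv.subtypeEquivRight fun S => by simp [A, and_assoc, eq_comm]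
  have horbit : pairOrbit I = fun x => (swapClass ∘ profile) ⁻¹' {(swapClass ∘ profile) x} :=
    funext fun x => Set.ext fun y => mem_pairOrbit_iff_s7
  rw [Nat.card_congr hstates, horbit, Nat.card_image_fiber, Set.image_comp,
    image_profile_eq_multisetsWithSum, ← coe_image, Nat.card_coe_set_eq, Set.ncard_coe_finset]

/-- For `K = 3` and `I ≥ 6`, there are exactly 21 identity states. -/
theorem card_identityStates_three (I : ℕ) (hI : 6 ≤ I) :
    Nat.card (IdentityStates 3 I) = 21 := by
  rw [card_identityStates, card_image_swapClass_multisetsWithSum_of_le hI]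
  decide +kernel
end

section
/- Let K ≥ 1 and I ≥ 1, and let g₁, g₂ be count vectors of size K on Fin I. Then D(g₁,g₂) = 0 if and only if there exists an index i such that g₁ = g₂ = K·e_i, where e_i is the count vector with value K at position i and 0 elsewhere; that is, D(g₁,g₂) = 0 iff all 2K drawn items are of one common kind. -/
open Finset

/-- The dissimilarity between two count vectors `g₁` and `g₂` of size `K`:
`D(g₁, g₂) = 1 - (1/K²) ∑ i, (g₁ i)(g₂ i)`. -/
noncomputable def dissim (K I : ℕ) (g₁ g₂ : Fin I → ℕ) : ℝ :=
  1 - (1 / (K : ℝ) ^ 2) * ∑ i, (g₁ i : ℝ) * (g₂ i : ℝ)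

/-- `D(g₁, g₂) = 0` if and only if both draws consist of `K` copies of one
common object: `g₁ = g₂ = K·e_i` for some index `i`. -/
theorem dissim_eq_zero_iff (K I : ℕ) (hK : 1 ≤ K) (hI : 1 ≤ I)
    (g₁ g₂ : Fin I → ℕ) (hg₁ : ∑ i, g₁ i = K) (hg₂ : ∑ i, g₂ i = K) :
    dissim K I g₁ g₂ = 0 ↔
      ∃ i : Fin I, g₁ = (fun j => if j = i then K else 0) ∧
        g₂ = (fun j => if j = i then K else 0) := by
  have hK0 : (K : ℝ) ≠ 0 := by positivity
  have key : dissim K I g₁ g₂ = 0 ↔ ∑ i, g₁ i * g₂ i = K * K := by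
    unfold dissim
    rw [sub_eq_zero, eq_comm, one_div, inv_mul_eq_div,
      div_eq_one_iff_eq (by positivity)]
    rw [show ((K:ℝ)^2) = ((K*K : ℕ) : ℝ) by push_cast; ring,
      show (∑ i, (g₁ i : ℝ) * (g₂ i : ℝ)) = ((∑ i, g₁ i * g₂ i : ℕ) : ℝ) by push_cast; ring]
    exact Nat.cast_inj
  rw [key]
  constructor
  · intro hS
    -- off-diagonal terms vanish
    have hexp : ∑ i, g₁ i * g₂ i + ∑ i, g₁ i * (K - g₂ i) = K * K := by
      rw [← Finset.sum_add_distrib]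
      have : ∀ i ∈ Finset.univ, g₁ i * g₂ i + g₁ i * (K - g₂ i) = g₁ i * K := by
        intro i _
        have hle : g₂ i ≤ K := hg₂ ▸ Finset.single_le_sum (f := g₂) (by intros; exact Nat.zero_le _) (Finset.mem_univ i)
        rw [← Nat.mul_add, Nat.add_sub_cancel' hle]
      rw [Finset.sum_congr rfl this, ← Finset.sum_mul, hg₁]
    have hT : ∑ i, g₁ i * (K - g₂ i) = 0 := by omega
    have hTi : ∀ i, g₁ i = 0 ∨ g₂ i = K := by
      intro i
      have := (Finset.sum_eq_zero_iff.mp hT) i (Finset.mem_univ i)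
      have hle : g₂ i ≤ K := hg₂ ▸ Finset.single_le_sum (f := g₂) (by intros; exact Nat.zero_le _) (Finset.mem_univ i)
      rcases Nat.mul_eq_zero.mp this with h | h
      · exact Or.inl h
      · right; omega
    -- find i with g₁ i ≠ 0
    obtain ⟨i, hi⟩ : ∃ i, g₁ i ≠ 0 := by
      by_contra h
      push_neg at h
      have : ∑ i, g₁ i = 0 := Finset.sum_eq_zero fun i _ => h i
      omega
    have h2i : g₂ i = K := (hTi i).resolve_left hi
    have h2 : ∀ j, j ≠ i → g₂ j = 0 := by
      intro j hj
      have : ∑ k, g₂ k = g₂ i + ∑ k ∈ Finset.univ.erase i, g₂ k := by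
        rw [Finset.add_sum_erase _ _ (Finset.mem_univ i)]
      have hz : ∑ k ∈ Finset.univ.erase i, g₂ k = 0 := by omega
      exact Finset.sum_eq_zero_iff.mp hz j (Finset.mem_erase.mpr ⟨hj, Finset.mem_univ j⟩)
    have h1 : ∀ j, j ≠ i → g₁ j = 0 := by
      intro j hj
      rcases hTi j with h | h
      · exact h
      · exfalso; have := h2 j hj; omega
    have h1i : g₁ i = K := by
      have : ∑ k, g₁ k = g₁ i + ∑ k ∈ Finset.univ.erase i, g₁ k := by
        rw [Finset.add_sum_erase _ _ (Finset.mem_univ i)]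
      have hz : ∑ k ∈ Finset.univ.erase i, g₁ k = 0 :=
        Finset.sum_eq_zero fun j hj => h1 j (Finset.mem_erase.mp hj).1
      omega
    exact ⟨i, funext fun j => by by_cases h : j = i <;> simp [h, h1i, h1 j, h2i],
      funext fun j => by by_cases h : j = i <;> simp [h, h2i, h2 j]⟩
  · rintro ⟨i, rfl, rfl⟩
    rw [Finset.sum_eq_single i]
    · simp
    · intro j _ hj; simp [hj]
    · intro h; exact absurd (Finset.mem_univ i) h
end
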